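/- For all real parameters α ≥ β > -1 and every natural number t, the normalized Jacobi polynomial satisfies |P̃_t^{(α,β)}(cos φ) - 1| ≤ (t(t+α+β+1)/(2(α+1))) · φ² for all real φ. -/

import Mathlib

open Real

noncomputable section

/-- Generalized binomial coefficient via the Gamma function. -/
noncomputable def rbinom (x y : ℝ) : ℝ :=
  Real.Gamma (x+1) / (Real.Gamma (y+1) * Real.Gamma (x-y+1))

/-- The Jacobi polynomial `P_t^{(α,β)}`, normalized by `P_t^{(α,β)}(1) = binom(t+α,t)`. -/
noncomputable def jacobiP (α β : ℝ) (t : ℕ) (u : ℝ) : ℝ :=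
  ∑ s ∈ Finset.range (t+1),
    rbinom ((t:ℝ)+α) ((t:ℝ)-(s:ℝ)) * rbinom ((t:ℝ)+β) (s:ℝ) * ((u-1)/2)^s * ((u+1)/2)^(t-s)

/-- The normalized Jacobi polynomial `P̃_t^{(α,β)} = P_t^{(α,β)} / P_t^{(α,β)}(1)`. -/
noncomputable def njacobi (α β : ℝ) (t : ℕ) (u : ℝ) : ℝ :=
  jacobiP α β t u / jacobiP α β t 1


open Finset

lemma rbinom_zero (x : ℝ) (hx : 0 < x + 1) : rbinom x 0 = 1 := by
  unfold rbinom
  rw [zero_add, Real.Gamma_one, sub_zero, one_mul, div_self (Real.Gamma_pos_of_pos hx).ne']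

lemma rbinom_prod (x : ℝ) (hx : -1 < x) (n : ℕ) :
    rbinom ((n:ℝ)+x) n = ∏ j ∈ range n, (x+j+1)/(j+1) := by
  induction n with
  | zero => simpa using rbinom_zero x (by linarith)
  | succ k ih =>
    rw [Finset.prod_range_succ, ← ih]
    unfold rbinom
    have e1 : (((k:ℕ)+1:ℕ):ℝ)+x+1 = ((k:ℝ)+x+1)+1 := by push_cast; ring
    have e2 : (((k:ℕ)+1:ℕ):ℝ)+1 = ((k:ℝ)+1)+1 := by push_cast; ring
    have e3 : (((k:ℕ)+1:ℕ):ℝ)+x-((k:ℝ)+1)+1 = x+1 := by push_cast; ring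
    have e4 : (k:ℝ)+x-k+1 = x+1 := by ring
    push_cast
    rw [show (k:ℝ)+1+x+1 = ((k:ℝ)+x+1)+1 by ring, show (k:ℝ)+1+x-((k:ℝ)+1)+1 = x+1 by ring,
      show (k:ℝ)+x-(k:ℝ)+1 = x+1 by ring,
      Real.Gamma_add_one (by have := Nat.cast_nonneg (α := ℝ) k; intro h; nlinarith : ((k:ℝ)+x+1) ≠ 0),
      Real.Gamma_add_one (by positivity : ((k:ℝ)+1) ≠ 0)]
    have g1 : Real.Gamma ((k:ℝ)+x+1) ≠ 0 := (Real.Gamma_pos_of_pos (by linarith)).ne'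
    have g2 : Real.Gamma ((k:ℝ)+1) ≠ 0 := (Real.Gamma_pos_of_pos (by positivity)).ne'
    have g3 : Real.Gamma (x+1) ≠ 0 := (Real.Gamma_pos_of_pos (by linarith)).ne'
    field_simp
    ring

lemma rbinom_nat_pos (x : ℝ) (hx : -1 < x) (n : ℕ) : 0 < rbinom ((n:ℝ)+x) n := by
  rw [rbinom_prod x hx n]
  refine Finset.prod_pos fun j _ => div_pos ?_ (by positivity)
  have := Nat.cast_nonneg (α := ℝ) j; linarith

lemma rbinom_nat_mono (x y : ℝ) (hx : -1 < x) (hxy : x ≤ y) (n : ℕ) :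
    rbinom ((n:ℝ)+x) n ≤ rbinom ((n:ℝ)+y) n := by
  rw [rbinom_prod x hx n, rbinom_prod y (by linarith) n]
  apply Finset.prod_le_prod
  · intro j _; have := Nat.cast_nonneg (α := ℝ) j
    have h1 : (0:ℝ) ≤ x+j+1 := by linarith
    positivity
  · intro j _; gcongr

lemma jacobiP_one (α β : ℝ) (hβ : -1 < β) (t : ℕ) :
    jacobiP α β t 1 = rbinom ((t:ℝ)+α) t := by
  unfold jacobiP
  rw [Finset.sum_eq_single 0]
  · simp [rbinom_zero ((t:ℝ)+β) (by have := Nat.cast_nonneg (α := ℝ) t; linarith)]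
  · intro s _ hs
    simp [zero_pow hs]
  · simp


lemma coeffI1 (α β : ℝ) (hα : -1 < α) (hβ : -1 < β) (m s : ℕ) (hs : s ≤ m) :
    ((s:ℝ)+1) * (rbinom ((m:ℝ)+1+α) ((m:ℝ)-(s:ℝ)) * rbinom ((m:ℝ)+1+β) ((s:ℝ)+1))
    + ((m:ℝ)+1-(s:ℝ)) * (rbinom ((m:ℝ)+1+α) ((m:ℝ)+1-(s:ℝ)) * rbinom ((m:ℝ)+1+β) (s:ℝ))
    = ((m:ℝ)+1+α+β+1) * (rbinom ((m:ℝ)+(α+1)) ((m:ℝ)-(s:ℝ)) * rbinom ((m:ℝ)+(β+1)) (s:ℝ)) := by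
  have hms : (s:ℝ) ≤ (m:ℝ) := by exact_mod_cast hs
  have hs0 : (0:ℝ) ≤ (s:ℝ) := Nat.cast_nonneg s
  unfold rbinom
  rw [show (m:ℝ)+1+α+1 = (m:ℝ)+α+2 by ring]
  rw [show (m:ℝ)+1+β+1 = (m:ℝ)+β+2 by ring]
  rw [show (m:ℝ)+(α+1)+1 = (m:ℝ)+α+2 by ring]
  rw [show (m:ℝ)+(β+1)+1 = (m:ℝ)+β+2 by ring]
  rw [show (m:ℝ)+1+α-((m:ℝ)-(s:ℝ))+1 = (α+(s:ℝ)+1)+1 by ring]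
  rw [show (s:ℝ)+1+1 = ((s:ℝ)+1)+1 by ring]
  rw [show (m:ℝ)+1+β-((s:ℝ)+1)+1 = (m:ℝ)+β-(s:ℝ)+1 by ring]
  rw [show (m:ℝ)+1-(s:ℝ)+1 = ((m:ℝ)-(s:ℝ)+1)+1 by ring]
  rw [show (m:ℝ)+1+α-((m:ℝ)+1-(s:ℝ))+1 = α+(s:ℝ)+1 by ring]
  rw [show (m:ℝ)+1+β-(s:ℝ)+1 = ((m:ℝ)+β-(s:ℝ)+1)+1 by ring]
  rw [show (m:ℝ)+(α+1)-((m:ℝ)-(s:ℝ))+1 = (α+(s:ℝ)+1)+1 by ring]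
  rw [show (m:ℝ)+(β+1)-(s:ℝ)+1 = ((m:ℝ)+β-(s:ℝ)+1)+1 by ring]
  rw [Real.Gamma_add_one (by nlinarith : (α+(s:ℝ)+1) ≠ 0)]
  rw [Real.Gamma_add_one (by nlinarith : ((s:ℝ)+1) ≠ 0)]
  rw [Real.Gamma_add_one (by nlinarith : ((m:ℝ)-(s:ℝ)+1) ≠ 0)]
  rw [Real.Gamma_add_one (by nlinarith : ((m:ℝ)+β-(s:ℝ)+1) ≠ 0)]
  have gA : Real.Gamma ((m:ℝ)+α+2) ≠ 0 := (Real.Gamma_pos_of_pos (by nlinarith)).ne'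
  have gB : Real.Gamma ((m:ℝ)+β+2) ≠ 0 := (Real.Gamma_pos_of_pos (by nlinarith)).ne'
  have g1 : Real.Gamma ((s:ℝ)+1) ≠ 0 := (Real.Gamma_pos_of_pos (by nlinarith)).ne'
  have g2 : Real.Gamma ((m:ℝ)-(s:ℝ)+1) ≠ 0 := (Real.Gamma_pos_of_pos (by nlinarith)).ne'
  have g3 : Real.Gamma (α+(s:ℝ)+1) ≠ 0 := (Real.Gamma_pos_of_pos (by nlinarith)).ne'
  have g4 : Real.Gamma ((m:ℝ)+β-(s:ℝ)+1) ≠ 0 := (Real.Gamma_pos_of_pos (by nlinarith)).ne'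
  have n3 : α+(s:ℝ)+1 ≠ 0 := by nlinarith
  have n4 : (m:ℝ)+β-(s:ℝ)+1 ≠ 0 := by nlinarith
  have n1 : (s:ℝ)+1 ≠ 0 := by nlinarith
  have n2 : (m:ℝ)-(s:ℝ)+1 ≠ 0 := by nlinarith
  field_simp
  ring


lemma jacobiP_hasDerivAt (α β : ℝ) (hα : -1 < α) (hβ : -1 < β) (m : ℕ) (u : ℝ) :
    HasDerivAt (jacobiP α β (m+1))
      (((m:ℝ)+1+α+β+1)/2 * jacobiP (α+1) (β+1) m u) u := by
  have hv : HasDerivAt (fun u : ℝ => (u-1)/2) (1/2) u :=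
    ((hasDerivAt_id u).sub_const 1).div_const 2
  have hw : HasDerivAt (fun u : ℝ => (u+1)/2) (1/2) u :=
    ((hasDerivAt_id u).add_const 1).div_const 2
  have key : ∀ s : ℕ, HasDerivAt
      (fun u : ℝ => rbinom (((m+1:ℕ):ℝ)+α) (((m+1:ℕ):ℝ)-(s:ℝ)) * rbinom (((m+1:ℕ):ℝ)+β) (s:ℝ)
        * ((u-1)/2)^s * ((u+1)/2)^(m+1-s))
      ((rbinom (((m+1:ℕ):ℝ)+α) (((m+1:ℕ):ℝ)-(s:ℝ)) * rbinom (((m+1:ℕ):ℝ)+β) (s:ℝ)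
          * ((s:ℝ) * ((u-1)/2)^(s-1) * (1/2))) * ((u+1)/2)^(m+1-s)
        + (rbinom (((m+1:ℕ):ℝ)+α) (((m+1:ℕ):ℝ)-(s:ℝ)) * rbinom (((m+1:ℕ):ℝ)+β) (s:ℝ)
          * ((u-1)/2)^s) * (((m+1-s:ℕ):ℝ) * ((u+1)/2)^(m+1-s-1) * (1/2))) u := by
    intro s
    exact ((hv.pow s).const_mul _).mul (hw.pow (m+1-s))
  have total := HasDerivAt.fun_sum (u := Finset.range (m+1+1))
    (fun s _ => key s)
  have : HasDerivAt (jacobiP α β (m+1)) (∑ s ∈ Finset.range (m+1+1),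
      ((rbinom (((m+1:ℕ):ℝ)+α) (((m+1:ℕ):ℝ)-(s:ℝ)) * rbinom (((m+1:ℕ):ℝ)+β) (s:ℝ)
          * ((s:ℝ) * ((u-1)/2)^(s-1) * (1/2))) * ((u+1)/2)^(m+1-s)
        + (rbinom (((m+1:ℕ):ℝ)+α) (((m+1:ℕ):ℝ)-(s:ℝ)) * rbinom (((m+1:ℕ):ℝ)+β) (s:ℝ)
          * ((u-1)/2)^s) * (((m+1-s:ℕ):ℝ) * ((u+1)/2)^(m+1-s-1) * (1/2)))) u := by
    exact total
  convert this using 1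
  rw [Finset.sum_add_distrib]
  rw [Finset.sum_range_succ' (fun s => (rbinom (((m+1:ℕ):ℝ)+α) (((m+1:ℕ):ℝ)-(s:ℝ)) * rbinom (((m+1:ℕ):ℝ)+β) (s:ℝ)
          * ((s:ℝ) * ((u-1)/2)^(s-1) * (1/2))) * ((u+1)/2)^(m+1-s)) (m+1)]
  rw [Finset.sum_range_succ (fun s => (rbinom (((m+1:ℕ):ℝ)+α) (((m+1:ℕ):ℝ)-(s:ℝ)) * rbinom (((m+1:ℕ):ℝ)+β) (s:ℝ)
          * ((u-1)/2)^s) * (((m+1-s:ℕ):ℝ) * ((u+1)/2)^(m+1-s-1) * (1/2))) (m+1)]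
  simp only [Nat.cast_zero, Nat.sub_self, Nat.cast_ofNat, zero_mul, mul_zero, add_zero]
  norm_num
  rw [jacobiP, Finset.mul_sum, ← Finset.sum_add_distrib]
  apply Finset.sum_congr rfl
  intro s hs
  have hsm : s ≤ m := Nat.lt_succ_iff.mp (Finset.mem_range.mp hs)
  have e3 : m+1-s-1 = m-s := by omega
  rw [e3]
  have c1 : ((m+1-s:ℕ):ℝ) = (m:ℝ)+1-(s:ℝ) := by
    have : m+1-s = (m-s)+1 := by omega
    rw [this]; push_cast [Nat.cast_sub hsm]; ring
  rw [c1]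
  push_cast
  linear_combination (-(((u-1)/2)^s * (((u+1)/2)^(m-s)))/2) * coeffI1 α β hα hβ m s hsm


lemma coeffB (x : ℝ) (hx : -1 < x) (k : ℕ) :
    ((k:ℝ)+2) * rbinom ((k:ℝ)+2+x) ((k:ℝ)+2) = (x+1) * rbinom ((k:ℝ)+2+x) ((k:ℝ)+1) := by
  have hk : (0:ℝ) ≤ (k:ℝ) := Nat.cast_nonneg k
  unfold rbinom
  rw [show (k:ℝ)+2+x-((k:ℝ)+2)+1 = x+1 by ring]
  rw [show (k:ℝ)+2+x-((k:ℝ)+1)+1 = (x+1)+1 by ring]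
  rw [show (k:ℝ)+2+1 = ((k:ℝ)+2)+1 by ring]
  rw [Real.Gamma_add_one (by nlinarith : ((k:ℝ)+2) ≠ 0)]
  rw [Real.Gamma_add_one (by nlinarith : (x+1) ≠ 0)]
  have gA : Real.Gamma ((k:ℝ)+2+x+1) ≠ 0 := (Real.Gamma_pos_of_pos (by nlinarith)).ne'
  have g1 : Real.Gamma ((k:ℝ)+2) ≠ 0 := (Real.Gamma_pos_of_pos (by nlinarith)).ne'
  have g2 : Real.Gamma ((k:ℝ)+1+1) ≠ 0 := (Real.Gamma_pos_of_pos (by nlinarith)).ne'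
  have g3 : Real.Gamma (x+1) ≠ 0 := (Real.Gamma_pos_of_pos (by nlinarith)).ne'
  have n1 : ((k:ℝ)+2) ≠ 0 := by nlinarith
  have n2 : (x+1) ≠ 0 := by nlinarith
  rw [show (k:ℝ)+1+1 = ((k:ℝ)+2) by ring] at *
  field_simp


lemma coeffI2 (a b : ℝ) (ha : -1 < a) (hb : -1 < b) (k s : ℕ) (hs : s ≤ k) :
    ((k:ℝ)+2) * (rbinom ((k:ℝ)+2+a) ((k:ℝ)+1-(s:ℝ)) * rbinom ((k:ℝ)+2+b) ((s:ℝ)+1))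
    = ((k:ℝ)+a+b+4) * (rbinom ((k:ℝ)+a+2) ((k:ℝ)-(s:ℝ)) * rbinom ((k:ℝ)+b+2) (s:ℝ))
    + (b+1) * (rbinom ((k:ℝ)+a+2) ((k:ℝ)+1-(s:ℝ)) * rbinom ((k:ℝ)+b+2) (s:ℝ))
    + (a+1) * (rbinom ((k:ℝ)+a+2) ((k:ℝ)-(s:ℝ)) * rbinom ((k:ℝ)+b+2) ((s:ℝ)+1)) := by
  have hks : (s:ℝ) ≤ (k:ℝ) := by exact_mod_cast hs
  have hs0 : (0:ℝ) ≤ (s:ℝ) := Nat.cast_nonneg s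
  unfold rbinom
  rw [show (k:ℝ)+2+a+1 = (k:ℝ)+a+3 by ring]
  rw [show (k:ℝ)+2+b+1 = (k:ℝ)+b+3 by ring]
  rw [show (k:ℝ)+a+2+1 = (k:ℝ)+a+3 by ring]
  rw [show (k:ℝ)+b+2+1 = (k:ℝ)+b+3 by ring]
  rw [show (k:ℝ)+1-(s:ℝ)+1 = ((k:ℝ)-(s:ℝ)+1)+1 by ring]
  rw [show (k:ℝ)+2+a-((k:ℝ)+1-(s:ℝ))+1 = a+(s:ℝ)+2 by ring]
  rw [show (s:ℝ)+1+1 = ((s:ℝ)+1)+1 by ring]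
  rw [show (k:ℝ)+2+b-((s:ℝ)+1)+1 = (k:ℝ)+b-(s:ℝ)+2 by ring]
  rw [show (k:ℝ)+a+2-((k:ℝ)-(s:ℝ))+1 = (a+(s:ℝ)+2)+1 by ring]
  rw [show (k:ℝ)+b+2-(s:ℝ)+1 = ((k:ℝ)+b-(s:ℝ)+2)+1 by ring]
  rw [show (k:ℝ)+a+2-((k:ℝ)+1-(s:ℝ))+1 = a+(s:ℝ)+2 by ring]
  rw [show (k:ℝ)+b+2-((s:ℝ)+1)+1 = (k:ℝ)+b-(s:ℝ)+2 by ring]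
  rw [Real.Gamma_add_one (by nlinarith : ((k:ℝ)-(s:ℝ)+1) ≠ 0)]
  rw [Real.Gamma_add_one (by nlinarith : ((s:ℝ)+1) ≠ 0)]
  rw [Real.Gamma_add_one (by nlinarith : (a+(s:ℝ)+2) ≠ 0)]
  rw [Real.Gamma_add_one (by nlinarith : ((k:ℝ)+b-(s:ℝ)+2) ≠ 0)]
  have gA : Real.Gamma ((k:ℝ)+a+3) ≠ 0 := (Real.Gamma_pos_of_pos (by nlinarith)).ne'
  have gB : Real.Gamma ((k:ℝ)+b+3) ≠ 0 := (Real.Gamma_pos_of_pos (by nlinarith)).ne'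
  have g1 : Real.Gamma ((s:ℝ)+1) ≠ 0 := (Real.Gamma_pos_of_pos (by nlinarith)).ne'
  have g2 : Real.Gamma ((k:ℝ)-(s:ℝ)+1) ≠ 0 := (Real.Gamma_pos_of_pos (by nlinarith)).ne'
  have g3 : Real.Gamma (a+(s:ℝ)+2) ≠ 0 := (Real.Gamma_pos_of_pos (by nlinarith)).ne'
  have g4 : Real.Gamma ((k:ℝ)+b-(s:ℝ)+2) ≠ 0 := (Real.Gamma_pos_of_pos (by nlinarith)).ne'
  have n1 : ((s:ℝ)+1) ≠ 0 := by nlinarith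
  have n2 : ((k:ℝ)-(s:ℝ)+1) ≠ 0 := by nlinarith
  have n3 : (a+(s:ℝ)+2) ≠ 0 := by nlinarith
  have n4 : ((k:ℝ)+b-(s:ℝ)+2) ≠ 0 := by nlinarith
  field_simp
  ring


lemma sum_assemble (k : ℕ) (f2 f1a f1b f0 : ℕ → ℝ)
    (hmid : ∀ s, s ≤ k → f2 s + f1a s + f1b (s+1) + f0 (s+1) = 0)
    (hb1 : f1a (k+1) + f0 (k+2) = 0) (hb2 : f1b 0 + f0 0 = 0) :
    (∑ s ∈ range (k+1), f2 s)
    + ((∑ s ∈ range ((k+1)+1), f1a s) + (∑ s ∈ range ((k+1)+1), f1b s))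
    + (∑ s ∈ range (((k+1)+1)+1), f0 s) = 0 := by
  rw [Finset.sum_range_succ f1a (k+1), Finset.sum_range_succ' f1b (k+1),
    Finset.sum_range_succ' f0 ((k+1)+1), Finset.sum_range_succ (fun s => f0 (s+1)) (k+1)]
  have M : (∑ s ∈ range (k+1), f2 s) + (∑ s ∈ range (k+1), f1a s)
      + (∑ s ∈ range (k+1), f1b (s+1)) + (∑ s ∈ range (k+1), f0 (s+1)) = 0 := by
    rw [← Finset.sum_add_distrib, ← Finset.sum_add_distrib, ← Finset.sum_add_distrib]
    apply Finset.sum_eq_zero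
    intro s hs
    exact hmid s (Nat.lt_succ_iff.mp (Finset.mem_range.mp hs))
  linarith [M, hb1, hb2]


lemma jacobi_ode (a b : ℝ) (ha : -1 < a) (hb : -1 < b) (k : ℕ) (u : ℝ) :
    (1-u^2) * ((((k:ℝ)+a+b+3)/2) * ((((k:ℝ)+a+b+4)/2) * jacobiP (a+2) (b+2) k u))
    + (b-a-(a+b+2)*u) * ((((k:ℝ)+a+b+3)/2) * jacobiP (a+1) (b+1) (k+1) u)
    + (((k:ℝ)+2)*((k:ℝ)+a+b+3)) * jacobiP a b (k+2) u = 0 := by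
  have H2 : (1-u^2) * ((((k:ℝ)+a+b+3)/2) * ((((k:ℝ)+a+b+4)/2) * jacobiP (a+2) (b+2) k u))
      = ∑ s ∈ range (k+1), (-(((k:ℝ)+a+b+3)*(((k:ℝ)+a+b+4))
          * (rbinom ((k:ℝ)+(a+2)) ((k:ℝ)-(s:ℝ)) * rbinom ((k:ℝ)+(b+2)) (s:ℝ)))
          * ((u-1)/2)^(s+1) * ((u+1)/2)^(k+1-s)) := by
    rw [jacobiP, Finset.mul_sum, Finset.mul_sum, Finset.mul_sum]
    apply Finset.sum_congr rfl
    intro s hs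
    have hsk : s ≤ k := Nat.lt_succ_iff.mp (Finset.mem_range.mp hs)
    rw [show k+1-s = (k-s)+1 by omega]
    ring
  have H1 : (b-a-(a+b+2)*u) * ((((k:ℝ)+a+b+3)/2) * jacobiP (a+1) (b+1) (k+1) u)
      = (∑ s ∈ range ((k+1)+1), (-((b+1)*((k:ℝ)+a+b+3)
          * (rbinom (((k+1:ℕ):ℝ)+(a+1)) (((k+1:ℕ):ℝ)-(s:ℝ)) * rbinom (((k+1:ℕ):ℝ)+(b+1)) (s:ℝ)))
          * ((u-1)/2)^(s+1) * ((u+1)/2)^(k+1-s)))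
      + (∑ s ∈ range ((k+1)+1), (-((a+1)*((k:ℝ)+a+b+3)
          * (rbinom (((k+1:ℕ):ℝ)+(a+1)) (((k+1:ℕ):ℝ)-(s:ℝ)) * rbinom (((k+1:ℕ):ℝ)+(b+1)) (s:ℝ)))
          * ((u-1)/2)^s * ((u+1)/2)^(k+2-s))) := by
    rw [jacobiP, Finset.mul_sum, Finset.mul_sum, ← Finset.sum_add_distrib]
    apply Finset.sum_congr rfl
    intro s hs
    have hsk : s ≤ k+1 := Nat.lt_succ_iff.mp (Finset.mem_range.mp hs)
    rw [show k+2-s = (k+1-s)+1 by omega]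
    ring
  have H0 : (((k:ℝ)+2)*((k:ℝ)+a+b+3)) * jacobiP a b (k+2) u
      = ∑ s ∈ range (((k+1)+1)+1), ((((k:ℝ)+2)*((k:ℝ)+a+b+3)
          * (rbinom (((k+2:ℕ):ℝ)+a) (((k+2:ℕ):ℝ)-(s:ℝ)) * rbinom (((k+2:ℕ):ℝ)+b) (s:ℝ)))
          * ((u-1)/2)^s * ((u+1)/2)^(k+2-s)) := by
    rw [jacobiP, Finset.mul_sum]
    apply Finset.sum_congr rfl
    intro s hs
    ring
  rw [H2, H1, H0]
  apply sum_assemble k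
  · intro s hs
    have e2 : k+2-(s+1) = k+1-s := by omega
    rw [e2]
    push_cast
    rw [show (k:ℝ)+1-((s:ℝ)+1) = (k:ℝ)-(s:ℝ) by ring]
    rw [show (k:ℝ)+2-((s:ℝ)+1) = (k:ℝ)+1-(s:ℝ) by ring]
    rw [show (k:ℝ)+1+(a+1) = (k:ℝ)+a+2 by ring]
    rw [show (k:ℝ)+1+(b+1) = (k:ℝ)+b+2 by ring]
    rw [show (k:ℝ)+(a+2) = (k:ℝ)+a+2 by ring]
    rw [show (k:ℝ)+(b+2) = (k:ℝ)+b+2 by ring]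
    linear_combination (((u-1)/2)^(s+1) * ((u+1)/2)^(k+1-s) * ((k:ℝ)+a+b+3)) * coeffI2 a b ha hb k s hs
  · simp only [Nat.sub_self, pow_zero, Nat.add_sub_cancel]
    push_cast
    rw [show (k:ℝ)+1-((k:ℝ)+1) = 0 by ring]
    rw [show (k:ℝ)+2-((k:ℝ)+2) = 0 by ring]
    rw [rbinom_zero ((k:ℝ)+1+(a+1)) (by nlinarith [Nat.cast_nonneg (α := ℝ) k])]
    rw [rbinom_zero ((k:ℝ)+2+a) (by nlinarith [Nat.cast_nonneg (α := ℝ) k])]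
    rw [show (k:ℝ)+1+(b+1) = (k:ℝ)+2+b by ring]
    linear_combination (((u-1)/2)^(k+1+1) * ((k:ℝ)+a+b+3)) * coeffB b hb k
  · simp only [Nat.sub_zero, Nat.cast_zero, pow_zero]
    push_cast
    rw [show (k:ℝ)+1-0 = (k:ℝ)+1 by ring]
    rw [show (k:ℝ)+2-0 = (k:ℝ)+2 by ring]
    rw [rbinom_zero ((k:ℝ)+1+(b+1)) (by nlinarith [Nat.cast_nonneg (α := ℝ) k])]
    rw [rbinom_zero ((k:ℝ)+2+b) (by nlinarith [Nat.cast_nonneg (α := ℝ) k])]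
    rw [show (k:ℝ)+1+(a+1) = (k:ℝ)+2+a by ring]
    linear_combination (((u+1)/2)^(k+2) * ((k:ℝ)+a+b+3)) * coeffB a ha k


lemma jacobiP_neg (a b : ℝ) (m : ℕ) (u : ℝ) :
    jacobiP a b m (-u) = (-1)^m * jacobiP b a m u := by
  unfold jacobiP
  rw [Finset.mul_sum]
  rw [← Finset.sum_range_reflect]
  apply Finset.sum_congr rfl
  intro s hs
  have hsm : s ≤ m := Nat.lt_succ_iff.mp (Finset.mem_range.mp hs)
  rw [show m+1-1-s = m-s by omega]
  rw [show m-(m-s) = s by omega]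
  rw [Nat.cast_sub hsm]
  rw [show (m:ℝ)-((m:ℝ)-(s:ℝ)) = (s:ℝ) by ring]
  rw [show (-u-1)/2 = (-1)*((u+1)/2) by ring, show (-u+1)/2 = (-1)*((u-1)/2) by ring,
    mul_pow, mul_pow]
  have sgn : (-1:ℝ)^(m-s) * (-1:ℝ)^s = (-1:ℝ)^m := by
    rw [← pow_add]; congr 1; omega
  linear_combination (rbinom ((m:ℝ)+a) (s:ℝ) * rbinom ((m:ℝ)+b) ((m:ℝ)-(s:ℝ))
    * ((u+1)/2)^(m-s) * ((u-1)/2)^s) * sgn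


lemma jacobi_half (a b : ℝ) (ha : -1 < a) (hb : -1 < b) (hab : 0 < a+b+1) (k : ℕ) (u : ℝ)
    (hu1 : -1 ≤ u) (hu2 : u ≤ 1) (hu0 : (b-a)/(a+b+1) ≤ u) :
    (jacobiP a b (k+2) u)^2 ≤ (jacobiP a b (k+2) 1)^2 := by
  have hk : (0:ℝ) ≤ (k:ℝ) := Nat.cast_nonneg k
  set c1 : ℝ := ((k:ℝ)+a+b+3)/2 with hc1
  set lam : ℝ := ((k:ℝ)+2)*((k:ℝ)+a+b+3) with hlam
  have hlampos : 0 < lam := by rw [hlam]; nlinarith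
  have hq : ∀ x : ℝ, HasDerivAt (jacobiP a b (k+2))
      (c1 * jacobiP (a+1) (b+1) (k+1) x) x := by
    intro x
    have h := jacobiP_hasDerivAt a b ha hb (k+1) x
    convert h using 2
    · push_cast; ring
  have hq1 : ∀ x : ℝ, HasDerivAt (jacobiP (a+1) (b+1) (k+1))
      ((((k:ℝ)+a+b+4)/2) * jacobiP (a+2) (b+2) k x) x := by
    intro x
    have h := jacobiP_hasDerivAt (a+1) (b+1) (by linarith) (by linarith) k x
    convert h using 2
    · ring
    · rw [show a+1+1 = a+2 by ring, show b+1+1 = b+2 by ring]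
  set G : ℝ → ℝ := fun x => lam * (jacobiP a b (k+2) x)^2
      + (1-x^2) * (c1 * jacobiP (a+1) (b+1) (k+1) x)^2 with hGdef
  have hG : ∀ x : ℝ, HasDerivAt G
      (2 * (c1 * jacobiP (a+1) (b+1) (k+1) x)^2 * ((a-b)+(a+b+1)*x)) x := by
    intro x
    have d1 : HasDerivAt (fun y => lam * (jacobiP a b (k+2) y)^2)
        (lam * (2 * jacobiP a b (k+2) x ^ 1 * (c1 * jacobiP (a+1) (b+1) (k+1) x))) x :=
      ((hq x).pow 2).const_mul lam
    have d2 : HasDerivAt (fun y : ℝ => 1 - y^2) (-((2:ℕ) * x^1)) x :=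
      (hasDerivAt_pow 2 x).const_sub 1
    have d3 : HasDerivAt (fun y => (c1 * jacobiP (a+1) (b+1) (k+1) y)^2)
        (2 * (c1 * jacobiP (a+1) (b+1) (k+1) x) ^ 1 * (c1 * ((((k:ℝ)+a+b+4)/2) * jacobiP (a+2) (b+2) k x))) x :=
      ((hq1 x).const_mul c1).pow 2
    have htot := d1.fun_add (d2.fun_mul d3)
    convert htot using 1
    case e'_4 => rfl
    case e'_5 => rfl
    have ode := jacobi_ode a b ha hb k x
    rw [hc1, hlam]
    push_cast
    linear_combination (-2 * (((k:ℝ)+a+b+3)/2 * jacobiP (a+1) (b+1) (k+1) x)) * ode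
  have mono : MonotoneOn G (Set.Icc ((b-a)/(a+b+1)) 1) := by
    apply monotoneOn_of_deriv_nonneg (convex_Icc _ _)
    · exact fun x _ => (hG x).continuousAt.continuousWithinAt
    · exact fun x _ => (hG x).differentiableAt.differentiableWithinAt
    · intro x hx
      rw [interior_Icc] at hx
      rw [(hG x).deriv]
      have h1 : 0 ≤ (a-b)+(a+b+1)*x := by
        have := (div_le_iff₀ hab).mp (le_of_lt hx.1)
        nlinarith
      positivity
  have hu0' : (b-a)/(a+b+1) ≤ 1 := le_trans hu0 hu2
  have hG1 : G u ≤ G 1 := mono ⟨hu0, hu2⟩ ⟨hu0', le_refl 1⟩ hu2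
  have e1 : G 1 = lam * (jacobiP a b (k+2) 1)^2 := by
    rw [hGdef]; norm_num
  have e2 : lam * (jacobiP a b (k+2) u)^2 ≤ G u := by
    rw [hGdef]
    have : 0 ≤ (1-u^2) * (c1 * jacobiP (a+1) (b+1) (k+1) u)^2 := by
      apply mul_nonneg _ (sq_nonneg _)
      nlinarith
    simp only []
    nlinarith
  rw [e1] at hG1
  nlinarith


lemma rbinom_one' (x : ℝ) (hx : -1 < x) : rbinom (1+x) 1 = x+1 := by
  unfold rbinom
  rw [show (1:ℝ)+x-1+1 = x+1 by ring, show (1:ℝ)+x+1 = (x+1)+1 by ring,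
    Real.Gamma_add_one (by linarith : x+1 ≠ 0), show (1:ℝ)+1 = 2 by norm_num,
    Real.Gamma_two]
  have := (Real.Gamma_pos_of_pos (by linarith : (0:ℝ) < x+1)).ne'
  field_simp

lemma jacobiP_zero (a b : ℝ) (ha : -1 < a) (hb : -1 < b) (u : ℝ) :
    jacobiP a b 0 u = 1 := by
  unfold jacobiP
  rw [Finset.sum_range_one]
  norm_num
  rw [rbinom_zero a (by linarith), rbinom_zero b (by linarith)]
  norm_num

lemma jacobiP_deg1 (a b : ℝ) (ha : -1 < a) (hb : -1 < b) (u : ℝ) :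
    jacobiP a b 1 u = (a+1)*((u+1)/2) + (b+1)*((u-1)/2) := by
  unfold jacobiP
  rw [Finset.sum_range_succ, Finset.sum_range_one]
  norm_num
  rw [rbinom_zero (1+b) (by linarith), rbinom_zero (1+a) (by linarith),
    rbinom_one' a ha, rbinom_one' b hb]
  ring


lemma jacobi_sq_le (a b : ℝ) (hb : 0 < b) (hba : b ≤ a) (m : ℕ) (u : ℝ)
    (hu1 : -1 ≤ u) (hu2 : u ≤ 1) :
    (jacobiP a b m u)^2 ≤ (jacobiP a b m 1)^2 := by
  have ha : -1 < a := by linarith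
  have hb' : -1 < b := by linarith
  have hab : 0 < a+b+1 := by linarith
  match m with
  | 0 => rw [jacobiP_zero a b ha hb' u, jacobiP_zero a b ha hb' 1]
  | 1 =>
    rw [jacobiP_deg1 a b ha hb' u, jacobiP_deg1 a b ha hb' 1]
    apply sq_le_sq'
    · nlinarith
    · nlinarith
  | (k+2) =>
    rcases le_or_gt ((b-a)/(a+b+1)) u with h | h
    · exact jacobi_half a b ha hb' hab k u hu1 hu2 h
    · have h1 : (a-b)/(b+a+1) ≤ -u := by
        rw [div_le_iff₀ (by linarith)]
        have := (lt_div_iff₀ hab).mp h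
        nlinarith
      have h2 := jacobi_half b a hb' ha (by linarith) k (-u)
        (by linarith) (by linarith) h1
      have e1 : jacobiP b a (k+2) (-u) = (-1)^(k+2) * jacobiP a b (k+2) u :=
        jacobiP_neg b a (k+2) u
      have e2 : (jacobiP b a (k+2) (-u))^2 = (jacobiP a b (k+2) u)^2 := by
        rw [e1, mul_pow, ← pow_mul, mul_comm (k+2) 2, pow_mul]
        norm_num
      rw [e2] at h2
      have e3 : jacobiP b a (k+2) 1 ≤ jacobiP a b (k+2) 1 := by
        rw [jacobiP_one b a ha, jacobiP_one a b hb']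
        exact rbinom_nat_mono b a hb' hba (k+2)
      have e4 : 0 < jacobiP b a (k+2) 1 := by
        rw [jacobiP_one b a ha]; exact rbinom_nat_pos b hb' (k+2)
      nlinarith


theorem one_sub_cos_le (x:ℝ) : 1 - Real.cos x ≤ x^2/2 := by
  have h1 : Real.cos x = 1 - 2 * Real.sin (x/2)^2 := by
    have := Real.cos_sq (x/2)
    have h2 : 2*(x/2) = x := by ring
    rw [h2] at this
    nlinarith [Real.sin_sq_add_cos_sq (x/2)]
  have h2 : |Real.sin (x/2)| ≤ |x/2| := Real.abs_sin_le_abs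
  have h3 : Real.sin (x/2)^2 ≤ (x/2)^2 := by
    have := pow_le_pow_left₀ (abs_nonneg (Real.sin (x/2))) h2 2
    rwa [sq_abs, sq_abs] at this
  nlinarith


lemma ratio_aux (α : ℝ) (hα : -1 < α) (m : ℕ) :
    (α+1) * ∏ j ∈ range m, ((α+1)+(j:ℝ)+1)/((j:ℝ)+1)
      = ((m:ℝ)+1) * ∏ j ∈ range (m+1), (α+(j:ℝ)+1)/((j:ℝ)+1) := by
  induction m with
  | zero => rw [Finset.prod_range_zero, Finset.prod_range_one]; norm_num
  | succ k ih =>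
    rw [Finset.prod_range_succ, Finset.prod_range_succ
      (fun j => (α+(j:ℝ)+1)/((j:ℝ)+1)) (k+1)]
    have hk : (0:ℝ) ≤ (k:ℝ) := Nat.cast_nonneg k
    have h1 : ((k:ℝ)+1) ≠ 0 := by nlinarith
    have h2 : ((k:ℝ)+2) ≠ 0 := by nlinarith
    push_cast
    field_simp
    linear_combination (α+(k:ℝ)+2) * ih


lemma ratio (α β : ℝ) (hα : -1 < α) (hb' : -1 < β) (m : ℕ) :
    (α+1) * jacobiP (α+1) (β+1) m 1 = ((m:ℝ)+1) * jacobiP α β (m+1) 1 := by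
  rw [jacobiP_one (α+1) (β+1) (by linarith) m, jacobiP_one α β hb' (m+1),
    rbinom_prod (α+1) (by linarith) m, rbinom_prod α hα (m+1)]
  exact ratio_aux α hα m


theorem jacobi_localization (α β : ℝ) (hba : β ≤ α) (hb : -1 < β) (t : ℕ) (φ : ℝ) :
    |njacobi α β t (Real.cos φ) - 1| ≤
      ((t:ℝ) * ((t:ℝ) + α + β + 1) / (2 * (α + 1))) * φ^2 := by
  have hα : -1 < α := lt_of_lt_of_le hb hba
  have hm0 : (0:ℝ) ≤ (t:ℝ) := Nat.cast_nonneg t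
  match t with
  | 0 =>
    unfold njacobi
    rw [jacobiP_zero α β hα hb _, jacobiP_zero α β hα hb 1]
    norm_num
  | (m+1) =>
    have hm : (0:ℝ) ≤ (m:ℝ) := Nat.cast_nonneg m
    have hPpos : 0 < jacobiP α β (m+1) 1 := by
      rw [jacobiP_one α β hb (m+1)]; exact rbinom_nat_pos α hα (m+1)
    have hq1pos : 0 < jacobiP (α+1) (β+1) m 1 := by
      rw [jacobiP_one (α+1) (β+1) (by linarith) m]
      exact rbinom_nat_pos (α+1) (by linarith) m
    set M : ℝ := ((m:ℝ)+1) * (((m:ℝ)+1) + α + β + 1) / (2*(α+1)) with hM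
    have hMnonneg : 0 ≤ M := by
      rw [hM]; apply div_nonneg; nlinarith; nlinarith
    have hMeq : (((m:ℝ)+1+α+β+1)/2) * jacobiP (α+1) (β+1) m 1 / jacobiP α β (m+1) 1 = M := by
      rw [hM, div_eq_div_iff hPpos.ne' (by nlinarith : (2*(α+1)) ≠ 0)]
      linear_combination (((m:ℝ)+1+α+β+1)) * (ratio α β hα hb m)
    have key : ∀ x ∈ Set.Icc (-1:ℝ) 1,
        ‖(((m:ℝ)+1+α+β+1)/2) * jacobiP (α+1) (β+1) m x / jacobiP α β (m+1) 1‖ ≤ M := by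
      intro x hx
      rw [Real.norm_eq_abs, abs_div, abs_mul, abs_of_pos hPpos,
        abs_of_pos (by nlinarith : (0:ℝ) < ((m:ℝ)+1+α+β+1)/2)]
      rw [← hMeq]
      have hsq := jacobi_sq_le (α+1) (β+1) (by linarith) (by linarith) m x hx.1 hx.2
      have habs := abs_le_of_sq_le_sq' hsq (le_of_lt hq1pos)
      have : |jacobiP (α+1) (β+1) m x| ≤ jacobiP (α+1) (β+1) m 1 :=
        abs_le.mpr ⟨habs.1, habs.2⟩
      rw [div_le_div_iff_of_pos_right hPpos]
      exact mul_le_mul_of_nonneg_left this (by nlinarith)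
    have hF : ∀ x ∈ Set.Icc (-1:ℝ) 1, HasDerivWithinAt (njacobi α β (m+1))
        ((((m:ℝ)+1+α+β+1)/2) * jacobiP (α+1) (β+1) m x / jacobiP α β (m+1) 1)
        (Set.Icc (-1:ℝ) 1) x := by
      intro x hx
      exact ((jacobiP_hasDerivAt α β hα hb m x).div_const _).hasDerivWithinAt
    have h1 : (1:ℝ) ∈ Set.Icc (-1:ℝ) 1 := by constructor <;> norm_num
    have hcos : Real.cos φ ∈ Set.Icc (-1:ℝ) 1 :=
      ⟨Real.neg_one_le_cos φ, Real.cos_le_one φ⟩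
    have mvt := Convex.norm_image_sub_le_of_norm_hasDerivWithin_le hF key
      (convex_Icc _ _) h1 hcos
    have hF1 : njacobi α β (m+1) 1 = 1 := by
      unfold njacobi; exact div_self hPpos.ne'
    rw [hF1, Real.norm_eq_abs, Real.norm_eq_abs,
      abs_of_nonpos (by linarith [Real.cos_le_one φ] : Real.cos φ - 1 ≤ 0)] at mvt
    have hcos2 : 1 - Real.cos φ ≤ φ^2/2 := one_sub_cos_le φ
    have hchain : |njacobi α β (m+1) (Real.cos φ) - 1| ≤ M * (φ^2/2) := by
      calc |njacobi α β (m+1) (Real.cos φ) - 1| ≤ M * -(Real.cos φ - 1) := mvt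
        _ ≤ M * (φ^2/2) := by
            apply mul_le_mul_of_nonneg_left _ hMnonneg
            linarith
    have hcast : ((m+1:ℕ):ℝ) = (m:ℝ)+1 := by push_cast; ring
    rw [hcast]
    calc |njacobi α β (m+1) (Real.cos φ) - 1| ≤ M * (φ^2/2) := hchain
      _ ≤ (((m:ℝ)+1) * (((m:ℝ)+1) + α + β + 1) / (2 * (α + 1))) * φ^2 := by
          rw [hM]
          nlinarith [sq_nonneg φ, hMnonneg, hM]
end
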